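/- arXiv:1711.08051 — 4 statements merged into one kernel-verified Lean document; each statement's English description precedes it below -/
import Mathlib

section
/- If f : [a,b] → ℝ (with 0 < a < b) is harmonically convex on [a,b], then its symmetrical transform f̆(t) := (1/2)[f(t) + f(abt/((a+b)t - ab))] is also harmonically convex on [a,b]. -/
/-!
In the coordinate `u = 1/t`, the harmonic mean `xy/(λx + (1-λ)y)` becomes the convex
combination `(1-λ)/x + λ/y`, so `f` is harmonically convex on `[a,b]` exactly when
`u ↦ f (1/u)` is convex on `[1/b, 1/a]`. In the same coordinate the map
`t ↦ abt/((a+b)t - ab)` is the reflection `u ↦ 1/a + 1/b - u` of `[1/b, 1/a]`, which preserves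
convexity; so the symmetrical transform is, in that coordinate, the average of two convex
functions.
-/

/-- The symmetrical transform of `f` on `[a,b]`. -/
noncomputable def symTransform (a b : ℝ) (f : ℝ → ℝ) (t : ℝ) : ℝ :=
  (1/2) * (f t + f (a * b * t / ((a + b) * t - a * b)))

open Set

def HarmonicConvexOn (s : Set ℝ) (f : ℝ → ℝ) : Prop :=
  ∀ x ∈ s, ∀ y ∈ s, ∀ l ∈ Icc (0:ℝ) 1,
    f (x * y / (l * x + (1 - l) * y)) ≤ (1 - l) * f x + l * f y

lemma harmonic_mean_eq_inv {x y : ℝ} (l : ℝ) (hx : x ≠ 0) (hy : y ≠ 0) :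
    x * y / (l * x + (1 - l) * y) = ((1 - l) * x⁻¹ + l * y⁻¹)⁻¹ := by
  field_simp
  ring

lemma inv_mem_Icc_iff {a b u : ℝ} (ha : 0 < a) (hb : 0 < b) :
    u⁻¹ ∈ Icc a b ↔ u ∈ Icc b⁻¹ a⁻¹ := by
  constructor
  · rintro ⟨hau, hub⟩
    have hu : 0 < u := inv_pos.1 (ha.trans_le hau)
    exact ⟨(inv_le_comm₀ hu hb).1 hub, (le_inv_comm₀ ha hu).1 hau⟩
  · rintro ⟨hbu, hua⟩
    have hu : 0 < u := (inv_pos.2 hb).trans_le hbu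
    exact ⟨(le_inv_comm₀ ha hu).2 hua, (inv_le_comm₀ hu hb).2 hbu⟩

theorem harmonicConvexOn_Icc_iff {a b : ℝ} {f : ℝ → ℝ} (ha : 0 < a) (hb : 0 < b) :
    HarmonicConvexOn (Icc a b) f ↔ ConvexOn ℝ (Icc b⁻¹ a⁻¹) (fun u => f u⁻¹) := by
  have ne_zero_of_mem {u : ℝ} (hu : u ∈ Icc b⁻¹ a⁻¹) : u ≠ 0 := ((inv_pos.2 hb).trans_le hu.1).ne'
  constructor
  · refine fun hf => ⟨convex_Icc _ _, fun u hu v hv p q hp hq hpq => ?_⟩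
    have h := hf u⁻¹ ((inv_mem_Icc_iff ha hb).2 hu) v⁻¹ ((inv_mem_Icc_iff ha hb).2 hv) q
      ⟨hq, by linarith⟩
    rwa [harmonic_mean_eq_inv q (inv_ne_zero (ne_zero_of_mem hu)) (inv_ne_zero (ne_zero_of_mem hv)),
      inv_inv, inv_inv, show 1 - q = p by linarith] at h
  · intro hf x hx y hy l ⟨hl0, hl1⟩
    have hx' := (inv_mem_Icc_iff ha hb).1 ((inv_inv x).symm ▸ hx)
    have hy' := (inv_mem_Icc_iff ha hb).1 ((inv_inv y).symm ▸ hy)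
    have h := hf.2 hx' hy' (sub_nonneg.2 hl1) hl0 (sub_add_cancel 1 l)
    simp only [smul_eq_mul, inv_inv] at h
    rwa [harmonic_mean_eq_inv l (ha.trans_le hx.1).ne' (ha.trans_le hy.1).ne']

theorem ConvexOn.comp_reflect_Icc {𝕜 β : Type*} [Field 𝕜] [LinearOrder 𝕜] [IsStrictOrderedRing 𝕜]
    [AddCommMonoid β] [PartialOrder β] [SMul 𝕜 β] {p q : 𝕜} {g : 𝕜 → β}
    (hg : ConvexOn 𝕜 (Icc p q) g) : ConvexOn 𝕜 (Icc p q) (fun u => g (p + q - u)) := by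
  have h := hg.comp_affineMap (AffineMap.const 𝕜 𝕜 (p + q) - AffineMap.id 𝕜 𝕜)
  rwa [show ⇑(AffineMap.const 𝕜 𝕜 (p + q) - AffineMap.id 𝕜 𝕜) = fun u => p + q - u from rfl,
    preimage_const_sub_Icc, add_sub_cancel_right, add_sub_cancel_left] at h

lemma symTransform_inv {a b : ℝ} (f : ℝ → ℝ) (ha : a ≠ 0) (hb : b ≠ 0) {u : ℝ} (hu : u ≠ 0) :
    symTransform a b f u⁻¹ = 1 / 2 * (f u⁻¹ + f (b⁻¹ + a⁻¹ - u)⁻¹) := by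
  have hreflect : a * b * u⁻¹ / ((a + b) * u⁻¹ - a * b) = (b⁻¹ + a⁻¹ - u)⁻¹ := by
    field_simp
  rw [symTransform, hreflect]

/-- If `f` is harmonically convex on `[a,b]` (`0 < a < b`), then its symmetrical
transform is also harmonically convex on `[a,b]`. -/
theorem symTransform_harmonic_convex (a b : ℝ) (f : ℝ → ℝ)
    (ha : 0 < a) (hab : a < b)
    (hf : ∀ x ∈ Set.Icc a b, ∀ y ∈ Set.Icc a b, ∀ l ∈ Set.Icc (0:ℝ) 1,
      f (x * y / (l * x + (1 - l) * y)) ≤ (1 - l) * f x + l * f y) :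
    ∀ x ∈ Set.Icc a b, ∀ y ∈ Set.Icc a b, ∀ l ∈ Set.Icc (0:ℝ) 1,
      symTransform a b f (x * y / (l * x + (1 - l) * y)) ≤
        (1 - l) * symTransform a b f x + l * symTransform a b f y := by
  have hb : 0 < b := ha.trans hab
  have hg := (harmonicConvexOn_Icc_iff ha hb).1 hf
  refine (harmonicConvexOn_Icc_iff ha hb).2 <|
    ((hg.add hg.comp_reflect_Icc).smul (by norm_num : (0:ℝ) ≤ 1 / 2)).congr fun u hu => ?_
  exact (symTransform_inv f ha.ne' hb.ne' ((inv_pos.2 hb).trans_le hu.1).ne').symm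
end

section
/- Let f : [a,b] → ℝ (0 < a < b) be symmetrized harmonically convex and integrable on [a,b]. Then for any x, y ∈ [a,b] with x ≠ y: (1/2)[f(2xy/(x+y)) + f(2abxy/(2xy(a+b) - ab(x+y)))] ≤ (xy/(2(y-x)))[∫_x^y f(t)/t² dt + ∫_{aby/((a+b)y-ab)}^{abx/((a+b)x-ab)} f(t)/t² dt] ≤ (1/4)[f(x) + f(abx/((a+b)x-ab)) + f(y) + f(aby/((a+b)y-ab))]. -/
open intervalIntegral

/-!
The substitution `t = 1 / s` turns harmonic convexity on `[a, b]` into ordinary convexity on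
`[1 / b, 1 / a]`, the harmonic reflection `t ↦ a b t / ((a + b) t - a b)` into the affine
reflection `s ↦ 1 / a + 1 / b - s`, and `f t / t ^ 2 dt` into `f (1 / s) ds`. So `s ↦ f̆ (1 / s)`
is convex, the two integrals of the statement add up to twice its integral over
`[1 / y, 1 / x]`, and the claim is the classical Hermite–Hadamard inequality for it, which follows
by pairing each point `s` of an interval `[α, β]` with its mirror image `α + β - s`.
-/

open Set MeasureTheory

theorem IntervalIntegrable.comp_add_sub {g : ℝ → ℝ} {α β : ℝ}
    (hg : IntervalIntegrable g volume α β) :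
    IntervalIntegrable (fun t => g (α + β - t)) volume α β := by
  simpa using (hg.comp_sub_left (α + β)).symm

section HermiteHadamard

variable {g : ℝ → ℝ} {α β t : ℝ}

theorem ConvexOn.map_midpoint_le_half_add_reflect (hg : ConvexOn ℝ (Icc α β) g)
    (ht : t ∈ Icc α β) : g ((α + β) / 2) ≤ (g t + g (α + β - t)) / 2 := by
  have hreflect : α + β - t ∈ Icc α β := ⟨by linarith [ht.2], by linarith [ht.1]⟩
  have := hg.2 ht hreflect (by norm_num : (0:ℝ) ≤ 1/2) (by norm_num : (0:ℝ) ≤ 1/2) (by norm_num)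
  have hmid : (1/2 : ℝ) • t + (1/2 : ℝ) • (α + β - t) = (α + β) / 2 := by
    simp only [smul_eq_mul]; ring
  rw [hmid] at this
  simp only [smul_eq_mul] at this
  linarith

theorem ConvexOn.add_map_reflect_le (hg : ConvexOn ℝ (Icc α β) g) (ht : t ∈ Icc α β) :
    g t + g (α + β - t) ≤ g α + g β := by
  have hαβ : α ≤ β := ht.1.trans ht.2
  rw [← segment_eq_Icc hαβ] at ht
  obtain ⟨μ, ν, hμ, hν, hμν, rfl⟩ := ht
  have hα : α ∈ Icc α β := left_mem_Icc.2 hαβ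
  have hβ : β ∈ Icc α β := right_mem_Icc.2 hαβ
  have h₁ := hg.2 hα hβ hμ hν hμν
  have h₂ := hg.2 hα hβ hν hμ (by rwa [add_comm])
  have hreflect : α + β - (μ • α + ν • β) = ν • α + μ • β := by
    simp only [smul_eq_mul]; linear_combination -(α + β) * hμν
  rw [hreflect]
  simp only [smul_eq_mul] at h₁ h₂ ⊢
  linear_combination h₁ + h₂ + (g α + g β) * hμν

theorem ConvexOn.hermite_hadamard (hαβ : α ≠ β) (hg : ConvexOn ℝ (uIcc α β) g)
    (hint : IntervalIntegrable g volume α β) :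
    g ((α + β) / 2) ≤ ⨍ t in α..β, g t ∧ ⨍ t in α..β, g t ≤ (g α + g β) / 2 := by
  wlog hlt : α < β generalizing α β
  · have hgt : β < α := lt_of_le_of_ne (not_lt.1 hlt) hαβ.symm
    rw [uIcc_comm] at hg
    rw [interval_average_symm, add_comm α, add_comm (g α)]
    exact this hαβ.symm hg hint.symm hgt
  rw [uIcc_of_lt hlt] at hg
  have hlen : 0 < β - α := sub_pos.2 hlt
  have hsymm : ∫ t in α..β, g t = ∫ t in α..β, (g t + g (α + β - t)) / 2 := by
    rw [intervalIntegral.integral_div, integral_add hint hint.comp_add_sub,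
      integral_comp_sub_left]
    norm_num
  have hsum_int : IntervalIntegrable (fun t => (g t + g (α + β - t)) / 2) volume α β :=
    (hint.add hint.comp_add_sub).div_const 2
  rw [interval_average_eq, smul_eq_mul, le_inv_mul_iff₀ hlen, inv_mul_le_iff₀ hlen, hsymm]
  constructor
  · have := integral_mono_on hlt.le intervalIntegrable_const hsum_int
      fun t ht => hg.map_midpoint_le_half_add_reflect ht
    rwa [intervalIntegral.integral_const, smul_eq_mul] at this
  · have := integral_mono_on hlt.le hsum_int intervalIntegrable_const
      fun t ht => div_le_div_of_nonneg_right (hg.add_map_reflect_le ht) zero_le_two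
    rwa [intervalIntegral.integral_const, smul_eq_mul] at this

end HermiteHadamard

theorem integral_div_sq_eq_integral_comp_one_div (f : ℝ → ℝ) {p q : ℝ} (hp : 0 < p) (hq : 0 < q) :
    ∫ t in p..q, f t / t ^ 2 = ∫ s in (1 / q)..(1 / p), f (1 / s) := by
  wlog hpq : p ≤ q generalizing p q
  · rw [integral_symm, this hq hp (le_of_not_ge hpq), integral_symm, neg_neg]
  have hpos : ∀ t ∈ Icc p q, 0 < t := fun t ht => hp.trans_le ht.1
  have key := integral_Icc_deriv_smul_of_deriv_nonpos (f := fun t : ℝ => 1 / t)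
    (f' := fun t => -(t ^ 2)⁻¹) (g := fun s => f (1 / s))
    (fun t ht => (continuousAt_const.div continuousAt_id (hpos t ht).ne').continuousWithinAt)
    (fun t ht => by simpa [one_div] using hasDerivAt_inv (hpos t (Ioo_subset_Icc_self ht)).ne')
    (fun t _ => by simp only [Left.neg_nonpos_iff]; positivity) hpq
  simp only [smul_eq_mul, one_div_one_div, neg_mul, MeasureTheory.integral_neg, neg_inj] at key
  rw [integral_of_le hpq, integral_of_le (one_div_le_one_div_of_le hp hpq),
    ← integral_Icc_eq_integral_Ioc, ← integral_Icc_eq_integral_Ioc, ← key]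
  congr 1 with t
  ring

theorem intervalIntegrable_comp_one_div {f : ℝ → ℝ} {p q : ℝ} (hp : 0 < p) (hpq : p ≤ q)
    (hf : IntervalIntegrable f volume p q) :
    IntervalIntegrable (fun s => f (1 / s)) volume (1 / q) (1 / p) := by
  have hpos : ∀ t ∈ Icc p q, 0 < t := fun t ht => hp.trans_le ht.1
  have hweighted : IntervalIntegrable (fun t => -(t ^ 2)⁻¹ * f t) volume p q := by
    refine hf.continuousOn_mul (ContinuousOn.neg (ContinuousOn.inv₀ (by fun_prop) fun t ht => ?_))
    rw [uIcc_of_le hpq] at ht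
    exact (pow_pos (hpos t ht) 2).ne'
  have key := integrableOn_Icc_deriv_smul_iff_of_deriv_nonpos (f := fun t : ℝ => 1 / t)
    (f' := fun t => -(t ^ 2)⁻¹) (g := fun s => f (1 / s))
    (fun t ht => (continuousAt_const.div continuousAt_id (hpos t ht).ne').continuousWithinAt)
    (fun t ht => by simpa [one_div] using hasDerivAt_inv (hpos t (Ioo_subset_Icc_self ht)).ne')
    (fun t _ => by simp only [Left.neg_nonpos_iff]; positivity) hpq
  simp only [smul_eq_mul, one_div_one_div] at key
  rw [intervalIntegrable_iff_integrableOn_Icc_of_le (one_div_le_one_div_of_le hp hpq), ← key,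
    ← intervalIntegrable_iff_integrableOn_Icc_of_le hpq]
  exact hweighted

theorem one_div_mem_Icc_of_mem_Icc_one_div {a b s : ℝ} (ha : 0 < a) (hb : 0 < b)
    (hs : s ∈ Icc (1 / b) (1 / a)) : 1 / s ∈ Icc a b := by
  have hs₀ : 0 < s := (one_div_pos.2 hb).trans_le hs.1
  exact ⟨(le_one_div ha hs₀).2 hs.2, (one_div_le hs₀ hb).2 hs.1⟩

theorem one_div_mem_Icc_one_div {a b x : ℝ} (ha : 0 < a) (hx : x ∈ Icc a b) :
    1 / x ∈ Icc (1 / b) (1 / a) :=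
  ⟨one_div_le_one_div_of_le (ha.trans_le hx.1) hx.2, one_div_le_one_div_of_le ha hx.1⟩

def HarmonicallyConvexOn (s : Set ℝ) (F : ℝ → ℝ) : Prop :=
  ∀ x ∈ s, ∀ y ∈ s, ∀ l ∈ Icc (0:ℝ) 1,
    F (x * y / (l * x + (1 - l) * y)) ≤ (1 - l) * F x + l * F y

theorem HarmonicallyConvexOn.convexOn_comp_one_div {F : ℝ → ℝ} {a b : ℝ}
    (hF : HarmonicallyConvexOn (Icc a b) F) (ha : 0 < a) (hb : 0 < b) :
    ConvexOn ℝ (Icc (1 / b) (1 / a)) (fun s => F (1 / s)) := by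
  refine ⟨convex_Icc _ _, fun s hs t ht μ ν hμ hν hμν => ?_⟩
  have hs₀ : 0 < s := (one_div_pos.2 hb).trans_le hs.1
  have ht₀ : 0 < t := (one_div_pos.2 hb).trans_le ht.1
  have key := hF _ (one_div_mem_Icc_of_mem_Icc_one_div ha hb hs)
    _ (one_div_mem_Icc_of_mem_Icc_one_div ha hb ht) ν ⟨hν, by linarith⟩
  have hμ' : 1 - ν = μ := by linarith
  have harm : 1 / s * (1 / t) / (ν * (1 / s) + (1 - ν) * (1 / t)) = 1 / (μ • s + ν • t) := by
    rw [hμ', smul_eq_mul, smul_eq_mul]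
    field_simp
    ring
  rw [harm, hμ'] at key
  simpa only [smul_eq_mul] using key

theorem harmonic_reflection_eq_one_div {a b t : ℝ} (ha : a ≠ 0) (hb : b ≠ 0) (ht : t ≠ 0) :
    a * b * t / ((a + b) * t - a * b) = 1 / (1 / a + 1 / b - 1 / t) := by
  have hrecip : 1 / a + 1 / b - 1 / t = ((a + b) * t - a * b) / (a * b * t) := by
    field_simp
    ring
  rw [hrecip, one_div_div]

theorem symTransform_one_div {a b s : ℝ} (f : ℝ → ℝ) (ha : a ≠ 0) (hb : b ≠ 0) (hs : s ≠ 0) :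
    symTransform a b f (1 / s) = (f (1 / s) + f (1 / (1 / a + 1 / b - s))) / 2 := by
  rw [symTransform, harmonic_reflection_eq_one_div ha hb (one_div_ne_zero hs), one_div_one_div]
  ring

section SymTransform

variable {a b : ℝ} {f : ℝ → ℝ}

theorem intervalIntegrable_symTransform_comp_one_div (ha : 0 < a) (hab : a ≤ b)
    (hf : IntervalIntegrable f volume a b) :
    IntervalIntegrable (fun s => symTransform a b f (1 / s)) volume (1 / b) (1 / a) := by
  have hF := intervalIntegrable_comp_one_div ha hab hf
  refine ((hF.add hF.symm.comp_add_sub.symm).div_const 2).congr fun s hs => ?_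
  have hs₀ : 0 < s := by
    rw [uIoc_of_le (one_div_le_one_div_of_le ha hab)] at hs
    exact (one_div_pos.2 (ha.trans_le hab)).trans hs.1
  exact (symTransform_one_div f ha.ne' (ha.trans_le hab).ne' hs₀.ne').symm

theorem integral_symTransform_comp_one_div (ha : 0 < a) (hab : a ≤ b)
    (hf : IntervalIntegrable f volume a b) {x y : ℝ} (hx : x ∈ Icc a b) (hy : y ∈ Icc a b) :
    ∫ s in (1 / y)..(1 / x), symTransform a b f (1 / s) =
      ((∫ t in x..y, f t / t ^ 2) +
        ∫ t in (a * b * y / ((a + b) * y - a * b))..(a * b * x / ((a + b) * x - a * b)),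
          f t / t ^ 2) / 2 := by
  have hb : 0 < b := ha.trans_le hab
  have hx₀ : 0 < x := ha.trans_le hx.1
  have hy₀ : 0 < y := ha.trans_le hy.1
  have hsub : uIcc (1 / y) (1 / x) ⊆ Icc (1 / b) (1 / a) :=
    uIcc_subset_Icc (one_div_mem_Icc_one_div ha hy) (one_div_mem_Icc_one_div ha hx)
  have hsub' : uIcc (1 / y) (1 / x) ⊆ uIcc (1 / b) (1 / a) := by
    rwa [uIcc_of_le (one_div_le_one_div_of_le ha hab)]
  have hF := intervalIntegrable_comp_one_div ha hab hf
  have hreflect_pos : ∀ z ∈ Icc a b, 0 < 1 / a + 1 / b - 1 / z := fun z hz => by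
    linarith [one_div_pos.2 hb, (one_div_mem_Icc_one_div ha hz).2]
  rw [integral_congr fun s hs => symTransform_one_div f ha.ne' hb.ne'
      ((one_div_pos.2 hb).trans_le (hsub hs).1).ne',
    intervalIntegral.integral_div,
    integral_add (hF.mono_set hsub') (hF.symm.comp_add_sub.symm.mono_set hsub'),
    integral_comp_sub_left (fun s => f (1 / s)),
    integral_div_sq_eq_integral_comp_one_div f hx₀ hy₀,
    harmonic_reflection_eq_one_div ha.ne' hb.ne' hx₀.ne',
    harmonic_reflection_eq_one_div ha.ne' hb.ne' hy₀.ne',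
    integral_div_sq_eq_integral_comp_one_div f (one_div_pos.2 (hreflect_pos y hy))
      (one_div_pos.2 (hreflect_pos x hx)), one_div_one_div, one_div_one_div]

end SymTransform

/-- Hermite–Hadamard type inequalities on subintervals for symmetrized
harmonically convex functions. -/
theorem hermite_hadamard_subinterval (a b : ℝ) (f : ℝ → ℝ)
    (ha : 0 < a) (hab : a < b)
    (hshc : ∀ x ∈ Set.Icc a b, ∀ y ∈ Set.Icc a b, ∀ l ∈ Set.Icc (0:ℝ) 1,
      symTransform a b f (x * y / (l * x + (1 - l) * y)) ≤
        (1 - l) * symTransform a b f x + l * symTransform a b f y)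
    (hint : IntervalIntegrable f MeasureTheory.volume a b) :
    ∀ x ∈ Set.Icc a b, ∀ y ∈ Set.Icc a b, x ≠ y →
      (1/2) * (f (2 * x * y / (x + y)) +
          f (2 * a * b * x * y / (2 * x * y * (a + b) - a * b * (x + y)))) ≤
        x * y / (2 * (y - x)) *
          ((∫ t in x..y, f t / t ^ 2) +
            ∫ t in (a * b * y / ((a + b) * y - a * b))..(a * b * x / ((a + b) * x - a * b)),
              f t / t ^ 2) ∧
      x * y / (2 * (y - x)) *
          ((∫ t in x..y, f t / t ^ 2) +
            ∫ t in (a * b * y / ((a + b) * y - a * b))..(a * b * x / ((a + b) * x - a * b)),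
              f t / t ^ 2) ≤
        (1/4) * (f x + f (a * b * x / ((a + b) * x - a * b)) + f y +
          f (a * b * y / ((a + b) * y - a * b))) := by
  intro x hx y hy hxy
  have hb : 0 < b := ha.trans hab
  have hx₀ : 0 < x := ha.trans_le hx.1
  have hy₀ : 0 < y := ha.trans_le hy.1
  have hsub : uIcc (1 / y) (1 / x) ⊆ Icc (1 / b) (1 / a) :=
    uIcc_subset_Icc (one_div_mem_Icc_one_div ha hy) (one_div_mem_Icc_one_div ha hx)
  have hconv : ConvexOn ℝ (uIcc (1 / y) (1 / x)) (fun s => symTransform a b f (1 / s)) :=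
    (HarmonicallyConvexOn.convexOn_comp_one_div hshc ha hb).subset hsub (convex_uIcc _ _)
  have hint' : IntervalIntegrable (fun s => symTransform a b f (1 / s)) volume (1 / y) (1 / x) :=
    (intervalIntegrable_symTransform_comp_one_div ha hab.le hint).mono_set
      (by rwa [uIcc_of_le (one_div_le_one_div_of_le ha hab.le)])
  have hne : 1 / y ≠ 1 / x := fun h => hxy (by simpa using h.symm)
  have havg : x * y / (2 * (y - x)) *
      ((∫ t in x..y, f t / t ^ 2) +
        ∫ t in (a * b * y / ((a + b) * y - a * b))..(a * b * x / ((a + b) * x - a * b)),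
          f t / t ^ 2) = ⨍ s in (1 / y)..(1 / x), symTransform a b f (1 / s) := by
    rw [interval_average_eq, integral_symTransform_comp_one_div ha hab.le hint hx hy,
      smul_eq_mul]
    have : y - x ≠ 0 := sub_ne_zero.2 hxy.symm
    field_simp
  have hmid : symTransform a b f (1 / ((1 / y + 1 / x) / 2)) = (1/2) * (f (2 * x * y / (x + y)) +
      f (2 * a * b * x * y / (2 * x * y * (a + b) - a * b * (x + y)))) := by
    have hharm : 1 / ((1 / y + 1 / x) / 2) = 2 * x * y / (x + y) := by field_simp
    rw [hharm, symTransform]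
    congr 3
    field_simp
  have hends : (symTransform a b f (1 / (1 / y)) + symTransform a b f (1 / (1 / x))) / 2 =
      (1/4) * (f x + f (a * b * x / ((a + b) * x - a * b)) + f y +
        f (a * b * y / ((a + b) * y - a * b))) := by
    simp only [one_div_one_div, symTransform]
    ring
  rw [havg, ← hmid, ← hends]
  exact hconv.hermite_hadamard hne hint'
end

section
/- If f : [a,b] → ℝ (0 < a < b) is harmonically convex, then for any x, y ∈ [a,b] with x ≠ y: f(2ab/(a+b)) ≤ (1/2)[f(2xy/(x+y)) + f(2abxy/(2xy(a+b) - ab(x+y)))]. -/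
/-! In reciprocal coordinates `s = t⁻¹` harmonic convexity of `f` on `[a, b]` is ordinary convexity
of `s ↦ f s⁻¹` on `[b⁻¹, a⁻¹]`. There `2xy/(x+y)` and `2abxy/(2xy(a+b) - ab(x+y))` become
`p = (x⁻¹ + y⁻¹)/2` and its reflection `a⁻¹ + b⁻¹ - p` in the centre of `[b⁻¹, a⁻¹]`, whose midpoint
is the reciprocal of `2ab/(a+b)`; the bound is midpoint convexity at these two points. -/

open Set

lemma two_mul_mul_div_add_eq_inv_inv_add_inv_div_two {K : Type*} [Field K] {u v : K}
    (hu : u ≠ 0) (hv : v ≠ 0) : 2 * u * v / (u + v) = ((u⁻¹ + v⁻¹) / 2)⁻¹ := by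
  field_simp
  ring

lemma inv_mem_Icc_inv_of_mem_Icc {K : Type*} [Field K] [LinearOrder K] [IsStrictOrderedRing K]
    {a b t : K} (ha : 0 < a) (ht : t ∈ Icc a b) :
    t⁻¹ ∈ Icc b⁻¹ a⁻¹ :=
  ⟨inv_anti₀ (ha.trans_le ht.1) ht.2, inv_anti₀ ha ht.1⟩

lemma HarmonicConvexOn.apply_inv_midpoint_le {s : Set ℝ} {f : ℝ → ℝ} (hf : HarmonicConvexOn s f)
    {p q : ℝ} (hp0 : p ≠ 0) (hq0 : q ≠ 0) (hp : p⁻¹ ∈ s) (hq : q⁻¹ ∈ s) :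
    f ((p + q) / 2)⁻¹ ≤ (f p⁻¹ + f q⁻¹) / 2 := by
  have h := hf p⁻¹ hp q⁻¹ hq (1 / 2) ⟨by norm_num, by norm_num⟩
  have harm : p⁻¹ * q⁻¹ / (1 / 2 * p⁻¹ + (1 - 1 / 2) * q⁻¹) = ((p + q) / 2)⁻¹ := by
    field_simp
    ring
  rw [harm] at h
  linarith

/-- For a harmonically convex `f` on `[a,b]`, the value at the global harmonic
midpoint is bounded by means over the symmetric pair of harmonic midpoints. -/
theorem harmonic_convex_midpoint_bound (a b : ℝ) (f : ℝ → ℝ)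
    (ha : 0 < a) (hab : a < b)
    (hf : ∀ x ∈ Set.Icc a b, ∀ y ∈ Set.Icc a b, ∀ l ∈ Set.Icc (0:ℝ) 1,
      f (x * y / (l * x + (1 - l) * y)) ≤ (1 - l) * f x + l * f y) :
    ∀ x ∈ Set.Icc a b, ∀ y ∈ Set.Icc a b, x ≠ y →
      f (2 * a * b / (a + b)) ≤
        (1/2) * (f (2 * x * y / (x + y)) +
          f (2 * a * b * x * y / (2 * x * y * (a + b) - a * b * (x + y)))) := by
  intro x hx y hy _
  have hb : 0 < b := ha.trans hab
  have hx0 : 0 < x := ha.trans_le hx.1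
  have hy0 : 0 < y := ha.trans_le hy.1
  obtain ⟨hbx, hxa⟩ := inv_mem_Icc_inv_of_mem_Icc ha hx
  obtain ⟨hby, hya⟩ := inv_mem_Icc_inv_of_mem_Icc ha hy
  have hb0 : 0 < b⁻¹ := inv_pos.2 hb
  set p := (x⁻¹ + y⁻¹) / 2 with hp
  set q := a⁻¹ + b⁻¹ - p with hq
  have hp_mem : p ∈ Icc b⁻¹ a⁻¹ := ⟨by linarith, by linarith⟩
  have hq_mem : q ∈ Icc b⁻¹ a⁻¹ := ⟨by linarith, by linarith⟩
  have mem_of_inv_mem {r : ℝ} (hr : r ∈ Icc b⁻¹ a⁻¹) : r⁻¹ ∈ Icc a b := by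
    simpa only [inv_inv] using inv_mem_Icc_inv_of_mem_Icc hb0 hr
  have hv : 2 * a * b * x * y / (2 * x * y * (a + b) - a * b * (x + y)) = q⁻¹ := by
    simp only [q, p]
    field_simp
    ring
  rw [two_mul_mul_div_add_eq_inv_inv_add_inv_div_two ha.ne' hb.ne',
    two_mul_mul_div_add_eq_inv_inv_add_inv_div_two hx0.ne' hy0.ne', hv,
    show a⁻¹ + b⁻¹ = p + q by ring]
  have hmid := HarmonicConvexOn.apply_inv_midpoint_le hf (hb0.trans_le hp_mem.1).ne'
    (hb0.trans_le hq_mem.1).ne' (mem_of_inv_mem hp_mem) (mem_of_inv_mem hq_mem)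
  linarith
end

section
/- Let h : J → [0,∞) with (0,1) ⊆ J, h not identically 0, h(1/2) > 0. If f : [a,b] → [0,∞) (0 < a < b) is symmetrized harmonically h-convex, h integrable on [0,1], f integrable on [a,b], then (1/(2h(1/2))) f(2ab/(a+b)) ≤ (ab/(b-a)) ∫_a^b f(t)/t² dt ≤ [f(a)+f(b)] ∫_0^1 h(t) dt. -/
/-!
Write `t_l = ab / (la + (1 - l)b)`, so that `1 / t_l = l / b + (1 - l) / a` is affine in `l`.
The substitution `t = t_l` turns `ab / (b - a) * ∫_a^b f(t) / t² dt` into `∫_0^1 f(t_l) dl`.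
The reflection `t ↦ abt / ((a + b)t - ab)` inside `symTransform` is `1/t ↦ 1/a + 1/b - 1/t`,
which maps `t_l` to `t_{1-l}`; hence `symTransform f (t_l) = (f(t_l) + f(t_{1-l})) / 2`, whose
integral over `[0, 1]` is again `∫_0^1 f(t_l) dl`. Harmonic `h`-convexity of `symTransform f`
between `a` and `b` with weight `l` bounds this integrand above by
`(h l + h (1 - l)) (f a + f b) / 2`; between `t_{1-l}` and `t_l` with weight `1/2`, whose
harmonic mean is the fixed point `2ab / (a + b)` of the reflection, it bounds it below by
`f(2ab / (a + b)) / (2 h(1/2))`. Integrating in `l` gives both inequalities.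
-/

open intervalIntegral

open MeasureTheory Set

noncomputable def harmonicComb (l x y : ℝ) : ℝ := x * y / (l * x + (1 - l) * y)

def IsHarmonicallyHConvexOn (h F : ℝ → ℝ) (s : Set ℝ) : Prop :=
  ∀ x ∈ s, ∀ y ∈ s, ∀ l ∈ Ioo (0 : ℝ) 1,
    F (harmonicComb l x y) ≤ h l * F y + h (1 - l) * F x

section Algebra

variable {l x y : ℝ}

lemma inv_harmonicComb (hx : x ≠ 0) (hy : y ≠ 0) :
    (harmonicComb l x y)⁻¹ = l * y⁻¹ + (1 - l) * x⁻¹ := by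
  rw [harmonicComb, inv_div]
  field_simp

lemma harmonicComb_denom_pos (hx : 0 < x) (hy : 0 < y) (hl : l ∈ Icc (0 : ℝ) 1) :
    0 < l * x + (1 - l) * y := by
  obtain ⟨hl0, hl1⟩ := hl
  rcases le_total x y with h | h <;> nlinarith

lemma harmonicComb_pos (hx : 0 < x) (hy : 0 < y) (hl : l ∈ Icc (0 : ℝ) 1) :
    0 < harmonicComb l x y :=
  div_pos (mul_pos hx hy) (harmonicComb_denom_pos hx hy hl)

lemma harmonicComb_zero (hy : y ≠ 0) : harmonicComb 0 x y = x := by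
  simp [harmonicComb, hy]

lemma harmonicComb_one (hx : x ≠ 0) : harmonicComb 1 x y = y := by
  simp [harmonicComb, hx]

lemma harmonicComb_half : harmonicComb (1 / 2) x y = 2 * x * y / (x + y) := by
  rw [harmonicComb, show 1 / 2 * x + (1 - 1 / 2) * y = (x + y) / 2 by ring, div_div_eq_mul_div]
  ring

lemma harmonicComb_mem_Ioo {a b : ℝ} (ha : 0 < a) (hab : a < b) (hl : l ∈ Ioo (0 : ℝ) 1) :
    harmonicComb l a b ∈ Ioo a b := by
  have hb := ha.trans hab
  have hpos := harmonicComb_pos ha hb (Ioo_subset_Icc_self hl)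
  have hinv : b⁻¹ < a⁻¹ := inv_strictAnti₀ ha hab
  obtain ⟨hl0, hl1⟩ := hl
  constructor
  · rw [← inv_lt_inv₀ hpos ha, inv_harmonicComb ha.ne' hb.ne']
    nlinarith [mul_pos hl0 (sub_pos.2 hinv)]
  · rw [← inv_lt_inv₀ hb hpos, inv_harmonicComb ha.ne' hb.ne']
    nlinarith [mul_pos (sub_pos.2 hl1) (sub_pos.2 hinv)]

end Algebra

section Symmetrization

variable {a b l : ℝ} {f : ℝ → ℝ}

lemma inv_reflection (ha : a ≠ 0) (hb : b ≠ 0) {t : ℝ} (ht : t ≠ 0) :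
    (a * b * t / ((a + b) * t - a * b))⁻¹ = a⁻¹ + b⁻¹ - t⁻¹ := by
  rw [inv_div]
  field_simp
  ring

lemma reflection_harmonicComb (ha : 0 < a) (hb : 0 < b) (hl : l ∈ Icc (0 : ℝ) 1) :
    a * b * harmonicComb l a b / ((a + b) * harmonicComb l a b - a * b) =
      harmonicComb (1 - l) a b := by
  apply inv_injective
  rw [inv_reflection ha.ne' hb.ne' (harmonicComb_pos ha hb hl).ne',
    inv_harmonicComb ha.ne' hb.ne', inv_harmonicComb ha.ne' hb.ne']
  ring

lemma symTransform_harmonicComb (ha : 0 < a) (hb : 0 < b) (hl : l ∈ Icc (0 : ℝ) 1) :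
    symTransform a b f (harmonicComb l a b) =
      (f (harmonicComb l a b) + f (harmonicComb (1 - l) a b)) / 2 := by
  rw [symTransform, reflection_harmonicComb ha hb hl]
  ring

lemma symTransform_left (ha : 0 < a) (hb : 0 < b) :
    symTransform a b f a = (f a + f b) / 2 := by
  simpa [harmonicComb_zero hb.ne', harmonicComb_one ha.ne'] using
    symTransform_harmonicComb (f := f) ha hb (l := 0) (by simp)

lemma symTransform_right (ha : 0 < a) (hb : 0 < b) :
    symTransform a b f b = (f a + f b) / 2 := by
  simpa [harmonicComb_zero hb.ne', harmonicComb_one ha.ne', add_comm] using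
    symTransform_harmonicComb (f := f) ha hb (l := 1) (by simp)

lemma harmonicComb_half_harmonicComb (ha : 0 < a) (hb : 0 < b) (hl : l ∈ Icc (0 : ℝ) 1) :
    harmonicComb (1 / 2) (harmonicComb (1 - l) a b) (harmonicComb l a b) =
      harmonicComb (1 / 2) a b := by
  have hl' : 1 - l ∈ Icc (0 : ℝ) 1 := ⟨by linarith [hl.2], by linarith [hl.1]⟩
  apply inv_injective
  rw [inv_harmonicComb (harmonicComb_pos ha hb hl').ne' (harmonicComb_pos ha hb hl).ne',
    inv_harmonicComb ha.ne' hb.ne', inv_harmonicComb ha.ne' hb.ne', inv_harmonicComb ha.ne' hb.ne']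
  ring

end Symmetrization

namespace IsHarmonicallyHConvexOn

variable {a b l : ℝ} {f h : ℝ → ℝ}

lemma apply_harmonicComb_half_le (hF : IsHarmonicallyHConvexOn h (symTransform a b f) (Icc a b))
    (ha : 0 < a) (hab : a < b) (hl : l ∈ Ioo (0 : ℝ) 1) :
    f (harmonicComb (1 / 2) a b) ≤
      h (1 / 2) * (f (harmonicComb l a b) + f (harmonicComb (1 - l) a b)) := by
  have hb := ha.trans hab
  have hl' : 1 - l ∈ Ioo (0 : ℝ) 1 := ⟨by linarith [hl.2], by linarith [hl.1]⟩
  have key := hF _ (Ioo_subset_Icc_self (harmonicComb_mem_Ioo ha hab hl')) _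
    (Ioo_subset_Icc_self (harmonicComb_mem_Ioo ha hab hl)) (1 / 2) ⟨by norm_num, by norm_num⟩
  rw [harmonicComb_half_harmonicComb ha hb (Ioo_subset_Icc_self hl),
    symTransform_harmonicComb ha hb ⟨by norm_num, by norm_num⟩,
    symTransform_harmonicComb ha hb (Ioo_subset_Icc_self hl),
    symTransform_harmonicComb ha hb (Ioo_subset_Icc_self hl'),
    sub_sub_cancel, show (1 : ℝ) - 1 / 2 = 1 / 2 by norm_num] at key
  linarith

lemma apply_harmonicComb_add_le (hF : IsHarmonicallyHConvexOn h (symTransform a b f) (Icc a b))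
    (ha : 0 < a) (hab : a < b) (hl : l ∈ Ioo (0 : ℝ) 1) :
    f (harmonicComb l a b) + f (harmonicComb (1 - l) a b) ≤ (h l + h (1 - l)) * (f a + f b) := by
  have hb := ha.trans hab
  have key := hF a (left_mem_Icc.2 hab.le) b (right_mem_Icc.2 hab.le) l hl
  rw [symTransform_harmonicComb ha hb (Ioo_subset_Icc_self hl), symTransform_left ha hb,
    symTransform_right ha hb] at key
  linarith

end IsHarmonicallyHConvexOn

section ChangeOfVariables

variable {a b : ℝ}

lemma hasDerivAt_harmonicComb {l : ℝ} (hl : l * a + (1 - l) * b ≠ 0) :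
    HasDerivAt (fun l => harmonicComb l a b) ((b - a) / (a * b) * harmonicComb l a b ^ 2) l := by
  have hden : HasDerivAt (fun l => l * a + (1 - l) * b) (a - b) l :=
    (((hasDerivAt_id l).mul_const a).add
      (((hasDerivAt_const l (1 : ℝ)).sub (hasDerivAt_id l)).mul_const b)).congr_deriv (by ring)
  refine ((hasDerivAt_const l (a * b)).div hden hl).congr_deriv ?_
  rw [harmonicComb]
  field_simp
  ring

lemma harmonicComb_left_injective (ha : a ≠ 0) (hb : b ≠ 0) (hab : a ≠ b) :
    Function.Injective (fun l => harmonicComb l a b) := by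
  intro l₁ l₂ heq
  have hinv := congrArg (·⁻¹) heq
  simp only [inv_harmonicComb ha hb] at hinv
  have hne : b⁻¹ - a⁻¹ ≠ 0 := sub_ne_zero.2 (inv_injective.ne hab.symm)
  have : (l₁ - l₂) * (b⁻¹ - a⁻¹) = 0 := by linear_combination hinv
  linarith [(mul_eq_zero.1 this).resolve_right hne]

lemma image_harmonicComb_Ioo (ha : 0 < a) (hab : a < b) :
    (fun l => harmonicComb l a b) '' Ioo 0 1 = Ioo a b := by
  have hb := ha.trans hab
  refine Subset.antisymm (image_subset_iff.2 fun l hl => harmonicComb_mem_Ioo ha hab hl) ?_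
  rintro t ⟨hat, htb⟩
  have ht := ha.trans hat
  have hta : t⁻¹ < a⁻¹ := inv_strictAnti₀ ha hat
  have hbt : b⁻¹ < t⁻¹ := inv_strictAnti₀ ht htb
  refine ⟨(a⁻¹ - t⁻¹) / (a⁻¹ - b⁻¹), ⟨by apply div_pos <;> linarith,
    (div_lt_one (by linarith)).2 (by linarith)⟩, inv_injective ?_⟩
  have hne : a⁻¹ - b⁻¹ ≠ 0 := by linarith
  simp only [inv_harmonicComb ha.ne' hb.ne']
  rw [div_mul_eq_mul_div, one_sub_div hne, div_mul_eq_mul_div, ← add_div, div_eq_iff hne]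
  ring

lemma hasDerivWithinAt_harmonicComb (ha : 0 < a) (hb : 0 < b) {l : ℝ}
    (hl : l ∈ Ioo (0 : ℝ) 1) :
    HasDerivWithinAt (fun l => harmonicComb l a b)
      ((b - a) / (a * b) * harmonicComb l a b ^ 2) (Ioo 0 1) l :=
  (hasDerivAt_harmonicComb
    (harmonicComb_denom_pos ha hb (Ioo_subset_Icc_self hl)).ne').hasDerivWithinAt

lemma abs_deriv_harmonicComb_smul (ha : 0 < a) (hab : a < b) {l : ℝ} (hl : l ∈ Ioo (0 : ℝ) 1)
    (c : ℝ) :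
    |(b - a) / (a * b) * harmonicComb l a b ^ 2| • (c / harmonicComb l a b ^ 2) =
      (b - a) / (a * b) * c := by
  have hb := ha.trans hab
  have hpos := harmonicComb_pos ha hb (Ioo_subset_Icc_self hl)
  have := sub_pos.2 hab
  rw [smul_eq_mul, abs_of_pos (by positivity)]
  field_simp

lemma mul_integral_div_sq_eq_integral_harmonicComb (ha : 0 < a) (hab : a < b) (g : ℝ → ℝ) :
    a * b / (b - a) * ∫ t in a..b, g t / t ^ 2 =
      ∫ l in (0 : ℝ)..1, g (harmonicComb l a b) := by
  have hb := ha.trans hab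
  rw [integral_of_le hab.le, integral_Ioc_eq_integral_Ioo, ← image_harmonicComb_Ioo ha hab,
    integral_image_eq_integral_abs_deriv_smul measurableSet_Ioo
      (fun l => hasDerivWithinAt_harmonicComb ha hb)
      (harmonicComb_left_injective ha.ne' hb.ne' hab.ne).injOn,
    setIntegral_congr_fun measurableSet_Ioo fun l hl => abs_deriv_harmonicComb_smul ha hab hl _,
    MeasureTheory.integral_const_mul, integral_of_le zero_le_one, integral_Ioc_eq_integral_Ioo]
  have := (sub_pos.2 hab).ne'
  field_simp

lemma IntervalIntegrable.comp_harmonicComb {g : ℝ → ℝ} (ha : 0 < a) (hab : a < b)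
    (hg : IntervalIntegrable g volume a b) :
    IntervalIntegrable (fun l => g (harmonicComb l a b)) volume 0 1 := by
  have hb := ha.trans hab
  have hcont : ContinuousOn (fun t : ℝ => (t ^ 2)⁻¹) (uIcc a b) := by
    refine (continuousOn_pow 2).inv₀ fun t ht => ?_
    rw [uIcc_of_le hab.le] at ht
    exact pow_ne_zero 2 (ha.trans_le ht.1).ne'
  have hG := (intervalIntegrable_iff_integrableOn_Ioo_of_le hab.le).1 (hg.mul_continuousOn hcont)
  simp only [← div_eq_mul_inv] at hG
  rw [← image_harmonicComb_Ioo ha hab,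
    integrableOn_image_iff_integrableOn_abs_deriv_smul measurableSet_Ioo
      (fun l => hasDerivWithinAt_harmonicComb ha hb)
      (harmonicComb_left_injective ha.ne' hb.ne' hab.ne).injOn,
    integrableOn_congr_fun (fun l hl => abs_deriv_harmonicComb_smul ha hab hl _) measurableSet_Ioo,
    IntegrableOn, integrable_const_mul_iff
      (isUnit_iff_ne_zero.2 (div_ne_zero (sub_pos.2 hab).ne' (mul_pos ha hb).ne'))] at hG
  exact (intervalIntegrable_iff_integrableOn_Ioo_of_le zero_le_one).2 hG

end ChangeOfVariables

section Reflection

variable {F : ℝ → ℝ}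

lemma IntervalIntegrable.comp_one_sub (hF : IntervalIntegrable F volume 0 1) :
    IntervalIntegrable (fun l => F (1 - l)) volume 0 1 := by
  simpa using (hF.comp_sub_left 1).symm

lemma integral_add_comp_one_sub (hF : IntervalIntegrable F volume 0 1) :
    ∫ l in (0 : ℝ)..1, (F l + F (1 - l)) = 2 * ∫ l in (0 : ℝ)..1, F l := by
  rw [integral_add hF hF.comp_one_sub, integral_comp_sub_left]
  norm_num
  ring

end Reflection

theorem hermite_hadamard_h_convex_general (a b : ℝ) (f h : ℝ → ℝ)
    (ha : 0 < a) (hab : a < b)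
    (hhalf : 0 < h (1/2))
    (hhint : IntervalIntegrable h MeasureTheory.volume 0 1)
    (hfint : IntervalIntegrable f MeasureTheory.volume a b)
    (hshc : ∀ x ∈ Set.Icc a b, ∀ y ∈ Set.Icc a b, ∀ l ∈ Set.Ioo (0:ℝ) 1,
      symTransform a b f (x * y / (l * x + (1 - l) * y)) ≤
        h l * symTransform a b f y + h (1 - l) * symTransform a b f x) :
    1 / (2 * h (1/2)) * f (2 * a * b / (a + b)) ≤
        a * b / (b - a) * ∫ t in a..b, f t / t ^ 2 ∧
      a * b / (b - a) * (∫ t in a..b, f t / t ^ 2) ≤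
        (f a + f b) * ∫ t in (0:ℝ)..1, h t := by
  have hconv : IsHarmonicallyHConvexOn h (symTransform a b f) (Icc a b) := hshc
  have hF := hfint.comp_harmonicComb ha hab
  have hF' : IntervalIntegrable (fun l => f (harmonicComb (1 - l) a b)) volume 0 1 :=
    hF.comp_one_sub
  rw [mul_integral_div_sq_eq_integral_harmonicComb ha hab, ← harmonicComb_half]
  constructor
  · rw [one_div_mul_eq_div, div_le_iff₀ (by positivity)]
    calc f (harmonicComb (1 / 2) a b)
        = ∫ _ in (0 : ℝ)..1, f (harmonicComb (1 / 2) a b) := by simp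
      _ ≤ ∫ l in (0 : ℝ)..1,
            h (1 / 2) * (f (harmonicComb l a b) + f (harmonicComb (1 - l) a b)) :=
        integral_mono_on_of_le_Ioo zero_le_one (by simp) ((hF.add hF').const_mul _)
          fun l hl => hconv.apply_harmonicComb_half_le ha hab hl
      _ = _ := by rw [intervalIntegral.integral_const_mul, integral_add_comp_one_sub hF]; ring
  · calc ∫ l in (0 : ℝ)..1, f (harmonicComb l a b)
        = (∫ l in (0 : ℝ)..1, (f (harmonicComb l a b) + f (harmonicComb (1 - l) a b))) / 2 := by
          rw [integral_add_comp_one_sub hF]; ring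
      _ ≤ (∫ l in (0 : ℝ)..1, (h l + h (1 - l)) * (f a + f b)) / 2 := by
          gcongr
          exact integral_mono_on_of_le_Ioo zero_le_one (hF.add hF')
            ((hhint.add hhint.comp_one_sub).mul_const _)
            fun l hl => hconv.apply_harmonicComb_add_le ha hab hl
      _ = _ := by rw [intervalIntegral.integral_mul_const, integral_add_comp_one_sub hhint]; ring

/-- Hermite–Hadamard type inequalities for symmetrized harmonically h-convex
functions. -/
theorem hermite_hadamard_h_convex (a b : ℝ) (f h : ℝ → ℝ)
    (ha : 0 < a) (hab : a < b)
    (hh0 : ∀ t ∈ Set.Ioo (0:ℝ) 1, 0 ≤ h t)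
    (hhalf : 0 < h (1/2))
    (hhint : IntervalIntegrable h MeasureTheory.volume 0 1)
    (hf0 : ∀ x ∈ Set.Icc a b, 0 ≤ f x)
    (hfint : IntervalIntegrable f MeasureTheory.volume a b)
    (hshc : ∀ x ∈ Set.Icc a b, ∀ y ∈ Set.Icc a b, ∀ l ∈ Set.Ioo (0:ℝ) 1,
      symTransform a b f (x * y / (l * x + (1 - l) * y)) ≤
        h l * symTransform a b f y + h (1 - l) * symTransform a b f x) :
    1 / (2 * h (1/2)) * f (2 * a * b / (a + b)) ≤
        a * b / (b - a) * ∫ t in a..b, f t / t ^ 2 ∧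
      a * b / (b - a) * (∫ t in a..b, f t / t ^ 2) ≤
        (f a + f b) * ∫ t in (0:ℝ)..1, h t :=
  hermite_hadamard_h_convex_general a b f h ha hab hhalf hhint hfint hshc
end
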